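/- Let N ⊆ ℝ^m be a nonempty closed set, p ∈ ℝ^m \ N with exactly two nearest points q₁ ≠ q₂ in N, and set N_j := N ∩ { y : |q_j - y| ≤ (1/4)|q₁-q₂| }. Then the function f := d_{N₁} - d_{N₂} is differentiable at p with gradient ∇f(p) = (p-q₁)/|p-q₁| - (p-q₂)/|p-q₂|, and this gradient is nonzero. -/

import Mathlib

open Set Metric

/-- The set of nearest points of `N` to `x`. -/
def nearestPts {E : Type*} [MetricSpace E] (N : Set E) (x : E) : Set E :=
  {q ∈ N | dist q x = infDist x N}

/-!
`N₁` keeps `q₁` but loses `q₂`, so `q₁` is the unique nearest point of `N₁` to `p`. Near `p`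
the nearest points of `N₁` then stay close to `q₁` (a strict-minimum argument using
compactness of closed balls), and `d_{N₁}` is squeezed between the first-order expansions
`y ↦ ‖p - q'‖ + ⟪u(p - q'), y - p⟫` at nearest points `q'` of `y` (from below)
and `y ↦ ‖y - q₁‖` (from above), where `u z = ‖z‖⁻¹ • z`. Both slopes tend to `u(p - q₁)`,
which gives the gradient; similarly for `N₂`. The two unit vectors differ because
`‖p - q₁‖ = ‖p - q₂‖` and `q₁ ≠ q₂`.
-/

open Filter Topology
open scoped RealInnerProductSpace

section MetricSpace

variable {E : Type*} [MetricSpace E] {A A' : Set E} {x q : E}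

lemma nearestPts_nonempty [ProperSpace E] (hA : IsClosed A) (hne : A.Nonempty) (x : E) :
    (nearestPts A x).Nonempty := by
  obtain ⟨q, hq, hdist⟩ := hA.exists_infDist_eq_dist hne x
  exact ⟨q, hq, by rw [dist_comm, hdist]⟩

lemma nearestPts_of_subset (hA' : A' ⊆ A) (hqA' : q ∈ A') (hq : q ∈ nearestPts A x) :
    nearestPts A' x = nearestPts A x ∩ A' := by
  have hinf : infDist x A' = infDist x A :=
    le_antisymm ((infDist_le_dist_of_mem hqA').trans_eq (by rw [dist_comm, hq.2]))
      (infDist_le_infDist_of_subset hA' ⟨q, hqA'⟩)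
  ext z
  simp only [nearestPts, mem_ofPred_eq, mem_inter_iff, hinf]
  exact ⟨fun h => ⟨⟨hA' h.1, h.2⟩, h.1⟩, fun h => ⟨h.2, h.1.2⟩⟩

lemma nearestPts_inter_closedBall_of_eq_pair {a b : E} (hx : nearestPts A x = {a, b}) {r : ℝ}
    (hr₀ : 0 ≤ r) (hr : r < dist a b) :
    nearestPts (A ∩ closedBall a r) x = {a} := by
  have ha : a ∈ nearestPts A x := hx ▸ mem_insert a {b}
  rw [nearestPts_of_subset inter_subset_left ⟨ha.1, mem_closedBall_self hr₀⟩ ha, hx]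
  ext z
  constructor
  · rintro ⟨rfl | rfl, -, hz⟩
    · rfl
    · linarith [mem_closedBall'.1 hz]
  · rintro rfl
    exact ⟨mem_insert z {b}, ha.1, mem_closedBall_self hr₀⟩

lemma exists_add_le_dist_of_nearestPts_eq_singleton [ProperSpace E] (hA : IsClosed A)
    (hx : nearestPts A x = {q}) {ε : ℝ} (hε : 0 < ε) :
    ∃ δ > 0, ∀ z ∈ A, ε ≤ dist q z → infDist x A + δ ≤ dist x z := by
  set A' := A ∩ {z | ε ≤ dist q z}
  rcases A'.eq_empty_or_nonempty with hempty | hne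
  · refine ⟨1, one_pos, fun z hz hεz => ?_⟩
    exact (eq_empty_iff_forall_notMem.1 hempty z ⟨hz, hεz⟩).elim
  have hA'closed : IsClosed A' := hA.inter (isClosed_le continuous_const (by fun_prop))
  obtain ⟨z₀, hz₀, hz₀dist⟩ := hA'closed.exists_infDist_eq_dist hne x
  have hz₀_ne : infDist x A ≠ dist x z₀ := by
    intro h
    have hz₀q : z₀ = q := by
      rw [← mem_singleton_iff, ← hx]
      exact ⟨hz₀.1, by rw [dist_comm, h]⟩
    have := hz₀.2
    simp only [mem_ofPred_eq, hz₀q, dist_self] at this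
    linarith
  refine ⟨infDist x A' - infDist x A, ?_, fun z hz hεz => ?_⟩
  · rw [hz₀dist]
    exact sub_pos.2 ((infDist_le_dist_of_mem hz₀.1).lt_of_ne hz₀_ne)
  · linarith [infDist_le_dist_of_mem (x := x) (show z ∈ A' from ⟨hz, hεz⟩)]

lemma tendsto_of_mem_nearestPts [ProperSpace E] (hA : IsClosed A)
    (hx : nearestPts A x = {q}) {s : E → E} (hs : ∀ y, s y ∈ nearestPts A y) :
    Tendsto s (𝓝 x) (𝓝 q) := by
  have hq : q ∈ nearestPts A x := hx ▸ rfl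
  rw [Metric.tendsto_nhds]
  intro ε hε
  obtain ⟨δ, hδ, hsep⟩ := exists_add_le_dist_of_nearestPts_eq_singleton hA hx hε
  filter_upwards [ball_mem_nhds x (half_pos hδ)] with y hy
  rw [mem_ball] at hy
  by_contra! hfar
  have hsy := hsep (s y) (hs y).1 (by rwa [dist_comm])
  have hsy_le : dist (s y) y ≤ dist y q := (hs y).2 ▸ infDist_le_dist_of_mem hq.1
  have hxq : dist x q = infDist x A := by rw [dist_comm, hq.2]
  -- `dist x (s y) ≤ dist x y + dist y q ≤ 2 * dist x y + infDist x A < infDist x A + δ`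
  linarith [dist_triangle x y (s y), dist_triangle y x q, dist_comm x y, dist_comm y (s y)]

end MetricSpace

section InnerProductSpace

variable {E : Type*} [NormedAddCommGroup E] [InnerProductSpace ℝ E]

/-- `‖a‖⁻¹ • a` is a subgradient of the norm at `a`. -/
lemma norm_add_inner_le_norm_add (a h : E) : ‖a‖ + ⟪‖a‖⁻¹ • a, h⟫ ≤ ‖a + h‖ := by
  rcases eq_or_ne a 0 with rfl | ha
  · simp
  have hpos : 0 < ‖a‖ := norm_pos_iff.2 ha
  have hcs : ⟪a, a + h⟫ ≤ ‖a‖ * ‖a + h‖ := real_inner_le_norm a (a + h)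
  rw [inner_add_right, real_inner_self_eq_norm_sq] at hcs
  rw [real_inner_smul_left, ← le_sub_iff_add_le', inv_mul_le_iff₀ hpos]
  nlinarith

lemma hasGradientAt_of_inner_le_of_le_inner [CompleteSpace E] {f : E → ℝ} {v x : E}
    {w₁ w₂ : E → E} (h₁ : Tendsto w₁ (𝓝 x) (𝓝 v)) (h₂ : Tendsto w₂ (𝓝 x) (𝓝 v))
    (hlow : ∀ᶠ y in 𝓝 x, ⟪w₁ y, y - x⟫ ≤ f y - f x)
    (hup : ∀ᶠ y in 𝓝 x, f y - f x ≤ ⟪w₂ y, y - x⟫) :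
    HasGradientAt f v x := by
  rw [hasGradientAt_iff_isLittleO, Asymptotics.isLittleO_iff]
  intro c hc
  filter_upwards [hlow, hup, Metric.tendsto_nhds.1 h₁ c hc, Metric.tendsto_nhds.1 h₂ c hc]
    with y hl hu hw₁ hw₂
  have hclose : ∀ w : E, dist w v < c → |⟪w, y - x⟫ - ⟪v, y - x⟫| ≤ c * ‖y - x‖ := by
    intro w hw
    rw [← inner_sub_left]
    refine (abs_real_inner_le_norm _ _).trans (mul_le_mul_of_nonneg_right ?_ (norm_nonneg _))
    exact (dist_eq_norm w v ▸ hw).le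
  have hc₁ := abs_le.1 (hclose _ hw₁)
  have hc₂ := abs_le.1 (hclose _ hw₂)
  rw [Real.norm_eq_abs, abs_le]
  constructor <;> linarith

theorem hasGradientAt_infDist [ProperSpace E] {A : Set E} {x q : E} (hA : IsClosed A)
    (hx : x ∉ A) (hq : nearestPts A x = {q}) :
    HasGradientAt (infDist · A) (‖x - q‖⁻¹ • (x - q)) x := by
  have hqA : q ∈ nearestPts A x := hq ▸ rfl
  have hxq : x - q ≠ 0 := sub_ne_zero.2 fun h => hx (h ▸ hqA.1)
  have hdist : ‖x - q‖ = infDist x A := by rw [← dist_eq_norm, dist_comm, hqA.2]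
  set u : E → E := fun z => ‖z‖⁻¹ • z
  have hu : ContinuousAt u (x - q) :=
    (continuousAt_id.norm.inv₀ (norm_ne_zero_iff.2 hxq)).smul continuousAt_id
  choose s hs using nearestPts_nonempty hA ⟨q, hqA.1⟩
  refine hasGradientAt_of_inner_le_of_le_inner (w₁ := fun y => u (x - s y))
    (w₂ := fun y => u (y - q)) ?_ ?_ (.of_forall fun y => ?_) (.of_forall fun y => ?_)
  · exact hu.tendsto.comp ((tendsto_of_mem_nearestPts hA hq hs).const_sub x)
  · exact hu.tendsto.comp ((continuous_sub_right q).tendsto x)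
  · have hsub := norm_add_inner_le_norm_add (x - s y) (y - x)
    have hx_le : infDist x A ≤ ‖x - s y‖ :=
      dist_eq_norm x (s y) ▸ infDist_le_dist_of_mem (hs y).1
    have hy_eq : ‖y - s y‖ = infDist y A := by rw [← dist_eq_norm, dist_comm, (hs y).2]
    rw [sub_add_sub_cancel', hy_eq] at hsub
    show ⟪‖x - s y‖⁻¹ • (x - s y), y - x⟫ ≤ _
    linarith
  · have hsub := norm_add_inner_le_norm_add (y - q) (x - y)
    have hy_le : infDist y A ≤ ‖y - q‖ := dist_eq_norm y q ▸ infDist_le_dist_of_mem hqA.1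
    rw [sub_add_sub_cancel', hdist, ← neg_sub y x, inner_neg_right] at hsub
    show _ ≤ ⟪‖y - q‖⁻¹ • (y - q), y - x⟫
    linarith

end InnerProductSpace

theorem stmt_6_general {m : ℕ} (N : Set (EuclideanSpace ℝ (Fin m)))
    (hN : IsClosed N)
    (p q₁ q₂ : EuclideanSpace ℝ (Fin m)) (hp : p ∉ N) (hq12 : q₁ ≠ q₂)
    (hproj : nearestPts N p = {q₁, q₂})
    (N₁ N₂ : Set (EuclideanSpace ℝ (Fin m)))
    (hN₁ : N₁ = N ∩ {y | dist q₁ y ≤ (1/4) * dist q₁ q₂})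
    (hN₂ : N₂ = N ∩ {y | dist q₂ y ≤ (1/4) * dist q₁ q₂}) :
    HasGradientAt (fun x => infDist x N₁ - infDist x N₂)
      (‖p - q₁‖⁻¹ • (p - q₁) - ‖p - q₂‖⁻¹ • (p - q₂)) p ∧
    ‖p - q₁‖⁻¹ • (p - q₁) - ‖p - q₂‖⁻¹ • (p - q₂) ≠ 0 := by
  have hq₁ : q₁ ∈ nearestPts N p := hproj ▸ mem_insert q₁ {q₂}
  have hq₂ : q₂ ∈ nearestPts N p := hproj ▸ mem_insert_of_mem q₁ rfl
  set r := (1/4) * dist q₁ q₂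
  have hr₀ : 0 ≤ r := by positivity
  have hr : r < dist q₁ q₂ := by
    have := dist_pos.2 hq12
    show 1/4 * dist q₁ q₂ < dist q₁ q₂
    linarith
  replace hN₁ : N₁ = N ∩ closedBall q₁ r := by ext; simp [hN₁, dist_comm]
  replace hN₂ : N₂ = N ∩ closedBall q₂ r := by ext; simp [hN₂, dist_comm]
  have hg₁ := hasGradientAt_infDist (hN₁ ▸ hN.inter isClosed_closedBall)
    (fun h => hp (hN₁ ▸ h).1) (hN₁ ▸ nearestPts_inter_closedBall_of_eq_pair hproj hr₀ hr)
  have hg₂ := hasGradientAt_infDist (hN₂ ▸ hN.inter isClosed_closedBall)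
    (fun h => hp (hN₂ ▸ h).1) (hN₂ ▸ nearestPts_inter_closedBall_of_eq_pair
      (pair_comm q₁ q₂ ▸ hproj) hr₀ (dist_comm q₁ q₂ ▸ hr))
  constructor
  · rw [hasGradientAt_iff_hasFDerivAt, map_sub]
    exact hg₁.hasFDerivAt.sub hg₂.hasFDerivAt
  · have hnorm : ‖p - q₂‖ = ‖p - q₁‖ := by
      rw [← dist_eq_norm, ← dist_eq_norm, dist_comm, hq₂.2, dist_comm, hq₁.2]
    have hpq₁ : ‖p - q₁‖⁻¹ ≠ 0 :=
      inv_ne_zero (norm_ne_zero_iff.2 (sub_ne_zero.2 fun h => hp (h ▸ hq₁.1)))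
    rw [sub_ne_zero, hnorm]
    exact fun h => hq12 (sub_right_injective (smul_right_injective _ hpq₁ h))

/-- If `p ∉ N` has exactly two nearest points `q₁ ≠ q₂`, and
`N_j := N ∩ {y : dist(q_j,y) ≤ (1/4)·dist(q₁,q₂)}`, then `f := d_{N₁} - d_{N₂}` is
differentiable at `p` with gradient `(p-q₁)/‖p-q₁‖ - (p-q₂)/‖p-q₂‖ ≠ 0`. -/
theorem stmt_6 {m : ℕ} (N : Set (EuclideanSpace ℝ (Fin m)))
    (hN : IsClosed N) (hNne : N.Nonempty)
    (p q₁ q₂ : EuclideanSpace ℝ (Fin m)) (hp : p ∉ N) (hq12 : q₁ ≠ q₂)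
    (hproj : nearestPts N p = {q₁, q₂})
    (N₁ N₂ : Set (EuclideanSpace ℝ (Fin m)))
    (hN₁ : N₁ = N ∩ {y | dist q₁ y ≤ (1/4) * dist q₁ q₂})
    (hN₂ : N₂ = N ∩ {y | dist q₂ y ≤ (1/4) * dist q₁ q₂}) :
    HasGradientAt (fun x => infDist x N₁ - infDist x N₂)
      (‖p - q₁‖⁻¹ • (p - q₁) - ‖p - q₂‖⁻¹ • (p - q₂)) p ∧
    ‖p - q₁‖⁻¹ • (p - q₁) - ‖p - q₂‖⁻¹ • (p - q₂) ≠ 0 :=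
  stmt_6_general N hN p q₁ q₂ hp hq12 hproj N₁ N₂ hN₁ hN₂
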